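/- For a three-qubit pure state |ψ⟩ = α₀|000⟩ + α₁e^{iθ}|100⟩ + α₂|101⟩ + α₃|110⟩ + α₄|111⟩ with α₀,…,α₄ ≥ 0, Σᵢ αᵢ² = 1 and θ ∈ [0,π], the exact identity S₁₂² + τ₁₃² + τ₂₃² = 1 + 8α₀²(α₃² + α₄²) = 3 − 8(α₀² − 1/2)² − 8α₀²α₁² − 8α₀²α₂² holds; consequently S₁₂² + [3f(ρ₁₃) − 2]² + [3f(ρ₂₃) − 2]² ≤ 3, and by symmetry S₁₃² + [3f(ρ₁₂) − 2]² + [3f(ρ₂₃) − 2]² ≤ 3 and S₂₃² + [3f(ρ₁₂) − 2]² + [3f(ρ₁₃) − 2]² ≤ 3. -/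

import Mathlib

/-- Squared steering observable S₁₂² of the reduced state ρ₁₂ of the three-qubit
pure state α₀|000⟩ + α₁e^{iθ}|100⟩ + α₂|101⟩ + α₃|110⟩ + α₄|111⟩. -/
noncomputable def S12sq (a0 a1 a2 a3 a4 θ : ℝ) : ℝ :=
  1 + 8 * a0 ^ 2 * a3 ^ 2 - 4 * a0 ^ 2 * a2 ^ 2 - 4 * a1 ^ 2 * a4 ^ 2
    - 4 * a2 ^ 2 * a3 ^ 2 + 8 * a1 * a2 * a3 * a4 * Real.cos θ

/-- Squared steering observable S₁₃² of the reduced state ρ₁₃. -/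
noncomputable def S13sq (a0 a1 a2 a3 a4 θ : ℝ) : ℝ :=
  1 + 8 * a0 ^ 2 * a2 ^ 2 - 4 * a0 ^ 2 * a3 ^ 2 - 4 * a1 ^ 2 * a4 ^ 2
    - 4 * a2 ^ 2 * a3 ^ 2 + 8 * a1 * a2 * a3 * a4 * Real.cos θ

/-- Squared steering observable S₂₃² of the reduced state ρ₂₃. -/
noncomputable def S23sq (a0 a1 a2 a3 a4 θ : ℝ) : ℝ :=
  1 - 4 * a0 ^ 2 * a2 ^ 2 - 4 * a0 ^ 2 * a3 ^ 2 + 8 * a1 ^ 2 * a4 ^ 2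
    + 8 * a2 ^ 2 * a3 ^ 2 - 16 * a1 * a2 * a3 * a4 * Real.cos θ

/-- Partial tangle τ₁₂ = 2α₀√(α₃²+α₄²). -/
noncomputable def tau12 (a0 a1 a2 a3 a4 θ : ℝ) : ℝ :=
  2 * a0 * Real.sqrt (a3 ^ 2 + a4 ^ 2)

/-- Partial tangle τ₁₃ = 2α₀√(α₂²+α₄²). -/
noncomputable def tau13 (a0 a1 a2 a3 a4 θ : ℝ) : ℝ :=
  2 * a0 * Real.sqrt (a2 ^ 2 + a4 ^ 2)

/-- Partial tangle τ₂₃ = 2√(α₀²α₄²+α₁²α₄²+α₂²α₃²−2α₁α₂α₃α₄cosθ). -/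
noncomputable def tau23 (a0 a1 a2 a3 a4 θ : ℝ) : ℝ :=
  2 * Real.sqrt (a0 ^ 2 * a4 ^ 2 + a1 ^ 2 * a4 ^ 2 + a2 ^ 2 * a3 ^ 2
    - 2 * a1 * a2 * a3 * a4 * Real.cos θ)

/-- Average teleportation fidelity f(ρ₁₂), determined by τ₁₂ = 3f(ρ₁₂) − 2. -/
noncomputable def fid12 (a0 a1 a2 a3 a4 θ : ℝ) : ℝ := (tau12 a0 a1 a2 a3 a4 θ + 2) / 3

/-- Average teleportation fidelity f(ρ₁₃), determined by τ₁₃ = 3f(ρ₁₃) − 2. -/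
noncomputable def fid13 (a0 a1 a2 a3 a4 θ : ℝ) : ℝ := (tau13 a0 a1 a2 a3 a4 θ + 2) / 3

/-- Average teleportation fidelity f(ρ₂₃), determined by τ₂₃ = 3f(ρ₂₃) − 2. -/
noncomputable def fid23 (a0 a1 a2 a3 a4 θ : ℝ) : ℝ := (tau23 a0 a1 a2 a3 a4 θ + 2) / 3

/-!
Each tangle τᵢⱼ² is a polynomial in the amplitudes, and in every combination
Sᵢⱼ² + τᵢₖ² + τⱼₖ² the interference terms in cos θ cancel, leaving 1 + 2τᵢⱼ².
The three inequalities thus reduce to τᵢⱼ² ≤ 1: each τᵢⱼ²/4 is at most a product p q of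
the total weights of two disjoint groups of amplitudes, and 4 p q ≤ (p + q)² ≤ 1 by
normalisation. For τ₂₃ this needs the Cauchy–Schwarz-type bound
(α₁α₄)² + (α₂α₃)² − 2α₁α₂α₃α₄ cos θ ≤ (α₁² + α₃²)(α₂² + α₄²).
-/

theorem two_mul_mul_mul_le_sq_add_sq {R : Type*} [CommRing R] [LinearOrder R]
    [IsStrictOrderedRing R] {x y c : R} (hc : |c| ≤ 1) :
    2 * x * y * c ≤ x ^ 2 + y ^ 2 := by
  have hc2 : c ^ 2 ≤ 1 := (sq_le_one_iff_abs_le_one c).2 hc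
  -- x² + y² − 2xyc = (x − yc)² + y²(1 − c²)
  nlinarith [sq_nonneg (x - y * c), mul_nonneg (sq_nonneg y) (sub_nonneg.2 hc2)]

theorem mul_le_one_div_four_of_add_le_one {R : Type*} [Field R] [LinearOrder R]
    [IsStrictOrderedRing R] {p q : R} (hp : 0 ≤ p) (hq : 0 ≤ q) (h : p + q ≤ 1) :
    p * q ≤ 1 / 4 := by
  have hsq : (p + q) ^ 2 ≤ 1 := pow_le_one₀ (add_nonneg hp hq) h
  linarith [four_mul_le_sq_add p q]

section ThreeQubit

variable (a0 a1 a2 a3 a4 θ : ℝ)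

theorem tau12_sq : tau12 a0 a1 a2 a3 a4 θ ^ 2 = 4 * a0 ^ 2 * (a3 ^ 2 + a4 ^ 2) := by
  rw [tau12, mul_pow, mul_pow, Real.sq_sqrt (by positivity)]
  ring

theorem tau13_sq : tau13 a0 a1 a2 a3 a4 θ ^ 2 = 4 * a0 ^ 2 * (a2 ^ 2 + a4 ^ 2) := by
  rw [tau13, mul_pow, mul_pow, Real.sq_sqrt (by positivity)]
  ring

theorem tau23_sq :
    tau23 a0 a1 a2 a3 a4 θ ^ 2 = 4 * (a0 ^ 2 * a4 ^ 2 + a1 ^ 2 * a4 ^ 2 + a2 ^ 2 * a3 ^ 2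
      - 2 * a1 * a2 * a3 * a4 * Real.cos θ) := by
  have hrad : 2 * (a1 * a4) * (a2 * a3) * Real.cos θ ≤ (a1 * a4) ^ 2 + (a2 * a3) ^ 2 :=
    two_mul_mul_mul_le_sq_add_sq (Real.abs_cos_le_one θ)
  rw [tau23, mul_pow, Real.sq_sqrt (by nlinarith [sq_nonneg (a0 * a4)])]
  ring

theorem S12sq_add_tau13_sq_add_tau23_sq :
    S12sq a0 a1 a2 a3 a4 θ + tau13 a0 a1 a2 a3 a4 θ ^ 2 + tau23 a0 a1 a2 a3 a4 θ ^ 2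
      = 1 + 2 * tau12 a0 a1 a2 a3 a4 θ ^ 2 := by
  rw [tau12_sq, tau13_sq, tau23_sq, S12sq]
  ring

theorem S13sq_add_tau12_sq_add_tau23_sq :
    S13sq a0 a1 a2 a3 a4 θ + tau12 a0 a1 a2 a3 a4 θ ^ 2 + tau23 a0 a1 a2 a3 a4 θ ^ 2
      = 1 + 2 * tau13 a0 a1 a2 a3 a4 θ ^ 2 := by
  rw [tau12_sq, tau13_sq, tau23_sq, S13sq]
  ring

theorem S23sq_add_tau12_sq_add_tau13_sq :
    S23sq a0 a1 a2 a3 a4 θ + tau12 a0 a1 a2 a3 a4 θ ^ 2 + tau13 a0 a1 a2 a3 a4 θ ^ 2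
      = 1 + 2 * tau23 a0 a1 a2 a3 a4 θ ^ 2 := by
  rw [tau12_sq, tau13_sq, tau23_sq, S23sq]
  ring

variable {a0 a1 a2 a3 a4}

theorem tau12_sq_le_one (hsum : a0 ^ 2 + a1 ^ 2 + a2 ^ 2 + a3 ^ 2 + a4 ^ 2 = 1) :
    tau12 a0 a1 a2 a3 a4 θ ^ 2 ≤ 1 := by
  have := mul_le_one_div_four_of_add_le_one (sq_nonneg a0)
    (add_nonneg (sq_nonneg a3) (sq_nonneg a4)) (by linarith [sq_nonneg a1, sq_nonneg a2])
  rw [tau12_sq]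
  linarith

theorem tau13_sq_le_one (hsum : a0 ^ 2 + a1 ^ 2 + a2 ^ 2 + a3 ^ 2 + a4 ^ 2 = 1) :
    tau13 a0 a1 a2 a3 a4 θ ^ 2 ≤ 1 := by
  have := mul_le_one_div_four_of_add_le_one (sq_nonneg a0)
    (add_nonneg (sq_nonneg a2) (sq_nonneg a4)) (by linarith [sq_nonneg a1, sq_nonneg a3])
  rw [tau13_sq]
  linarith

theorem tau23_sq_le_one (hsum : a0 ^ 2 + a1 ^ 2 + a2 ^ 2 + a3 ^ 2 + a4 ^ 2 = 1) :
    tau23 a0 a1 a2 a3 a4 θ ^ 2 ≤ 1 := by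
  have hcos : 2 * (a1 * a2) * (a3 * a4) * (-Real.cos θ) ≤ (a1 * a2) ^ 2 + (a3 * a4) ^ 2 :=
    two_mul_mul_mul_le_sq_add_sq (by rw [abs_neg]; exact Real.abs_cos_le_one θ)
  have hpq := mul_le_one_div_four_of_add_le_one
    (add_nonneg (add_nonneg (sq_nonneg a0) (sq_nonneg a1)) (sq_nonneg a3))
    (add_nonneg (sq_nonneg a2) (sq_nonneg a4)) (by linarith)
  rw [tau23_sq]
  nlinarith [sq_nonneg (a0 * a2)]

theorem three_mul_fid12_sub_two : 3 * fid12 a0 a1 a2 a3 a4 θ - 2 = tau12 a0 a1 a2 a3 a4 θ := by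
  rw [fid12]; ring

theorem three_mul_fid13_sub_two : 3 * fid13 a0 a1 a2 a3 a4 θ - 2 = tau13 a0 a1 a2 a3 a4 θ := by
  rw [fid13]; ring

theorem three_mul_fid23_sub_two : 3 * fid23 a0 a1 a2 a3 a4 θ - 2 = tau23 a0 a1 a2 a3 a4 θ := by
  rw [fid23]; ring

end ThreeQubit

theorem stmt15_general (a0 a1 a2 a3 a4 θ : ℝ)
    (hsum : a0 ^ 2 + a1 ^ 2 + a2 ^ 2 + a3 ^ 2 + a4 ^ 2 = 1) :
    S12sq a0 a1 a2 a3 a4 θ + tau13 a0 a1 a2 a3 a4 θ ^ 2 + tau23 a0 a1 a2 a3 a4 θ ^ 2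
        = 1 + 8 * a0 ^ 2 * (a3 ^ 2 + a4 ^ 2) ∧
    S12sq a0 a1 a2 a3 a4 θ + tau13 a0 a1 a2 a3 a4 θ ^ 2 + tau23 a0 a1 a2 a3 a4 θ ^ 2
        = 3 - 8 * (a0 ^ 2 - 1 / 2) ^ 2 - 8 * a0 ^ 2 * a1 ^ 2 - 8 * a0 ^ 2 * a2 ^ 2 ∧
    S12sq a0 a1 a2 a3 a4 θ + (3 * fid13 a0 a1 a2 a3 a4 θ - 2) ^ 2
        + (3 * fid23 a0 a1 a2 a3 a4 θ - 2) ^ 2 ≤ 3 ∧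
    S13sq a0 a1 a2 a3 a4 θ + (3 * fid12 a0 a1 a2 a3 a4 θ - 2) ^ 2
        + (3 * fid23 a0 a1 a2 a3 a4 θ - 2) ^ 2 ≤ 3 ∧
    S23sq a0 a1 a2 a3 a4 θ + (3 * fid12 a0 a1 a2 a3 a4 θ - 2) ^ 2
        + (3 * fid13 a0 a1 a2 a3 a4 θ - 2) ^ 2 ≤ 3 := by
  have h12 := S12sq_add_tau13_sq_add_tau23_sq a0 a1 a2 a3 a4 θ
  have h13 := S13sq_add_tau12_sq_add_tau23_sq a0 a1 a2 a3 a4 θ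
  have h23 := S23sq_add_tau12_sq_add_tau13_sq a0 a1 a2 a3 a4 θ
  have e1 : S12sq a0 a1 a2 a3 a4 θ + tau13 a0 a1 a2 a3 a4 θ ^ 2 + tau23 a0 a1 a2 a3 a4 θ ^ 2
      = 1 + 8 * a0 ^ 2 * (a3 ^ 2 + a4 ^ 2) := by
    rw [h12, tau12_sq]; ring
  rw [three_mul_fid12_sub_two, three_mul_fid13_sub_two, three_mul_fid23_sub_two]
  refine ⟨e1, by linear_combination e1 + 8 * a0 ^ 2 * hsum, ?_, ?_, ?_⟩
  · linarith [tau12_sq_le_one θ hsum]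
  · linarith [tau13_sq_le_one θ hsum]
  · linarith [tau23_sq_le_one θ hsum]

/-- For a three-qubit pure state α₀|000⟩ + α₁e^{iθ}|100⟩ + α₂|101⟩ + α₃|110⟩ + α₄|111⟩:
the exact identity
S₁₂² + τ₁₃² + τ₂₃² = 1 + 8α₀²(α₃²+α₄²) = 3 − 8(α₀²−1/2)² − 8α₀²α₁² − 8α₀²α₂²
holds; consequently S₁₂² + [3f(ρ₁₃)−2]² + [3f(ρ₂₃)−2]² ≤ 3, and by symmetry
S₁₃² + [3f(ρ₁₂)−2]² + [3f(ρ₂₃)−2]² ≤ 3 and S₂₃² + [3f(ρ₁₂)−2]² + [3f(ρ₁₃)−2]² ≤ 3. -/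
theorem stmt15 (a0 a1 a2 a3 a4 θ : ℝ)
    (h0 : 0 ≤ a0) (h1 : 0 ≤ a1) (h2 : 0 ≤ a2) (h3 : 0 ≤ a3) (h4 : 0 ≤ a4)
    (hsum : a0 ^ 2 + a1 ^ 2 + a2 ^ 2 + a3 ^ 2 + a4 ^ 2 = 1)
    (hθ : θ ∈ Set.Icc 0 Real.pi) :
    S12sq a0 a1 a2 a3 a4 θ + tau13 a0 a1 a2 a3 a4 θ ^ 2 + tau23 a0 a1 a2 a3 a4 θ ^ 2
        = 1 + 8 * a0 ^ 2 * (a3 ^ 2 + a4 ^ 2) ∧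
    S12sq a0 a1 a2 a3 a4 θ + tau13 a0 a1 a2 a3 a4 θ ^ 2 + tau23 a0 a1 a2 a3 a4 θ ^ 2
        = 3 - 8 * (a0 ^ 2 - 1 / 2) ^ 2 - 8 * a0 ^ 2 * a1 ^ 2 - 8 * a0 ^ 2 * a2 ^ 2 ∧
    S12sq a0 a1 a2 a3 a4 θ + (3 * fid13 a0 a1 a2 a3 a4 θ - 2) ^ 2
        + (3 * fid23 a0 a1 a2 a3 a4 θ - 2) ^ 2 ≤ 3 ∧
    S13sq a0 a1 a2 a3 a4 θ + (3 * fid12 a0 a1 a2 a3 a4 θ - 2) ^ 2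
        + (3 * fid23 a0 a1 a2 a3 a4 θ - 2) ^ 2 ≤ 3 ∧
    S23sq a0 a1 a2 a3 a4 θ + (3 * fid12 a0 a1 a2 a3 a4 θ - 2) ^ 2
        + (3 * fid13 a0 a1 a2 a3 a4 θ - 2) ^ 2 ≤ 3 :=
  stmt15_general a0 a1 a2 a3 a4 θ hsum
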